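/- Run-length bound for interleaved runs: if a string M is formed by concatenating k blocks, where the blocks are taken alternately (as contiguous segments) from strings with a total of R maximal character runs, then the number of maximal character runs in M is at most R + k. -/
import Mathlib


/-- The number of maximal runs (maximal segments of equal consecutive characters)
of a string. -/
def runsCount {β : Type*} [DecidableEq β] : List β → ℕ
  | [] => 0
  | [_] => 1
  | a :: b :: l => (if a = b then 0 else 1) + runsCount (b :: l)

theorem runsCount_append_le {β : Type*} [DecidableEq β] :
    ∀ (a b : List β), runsCount (a ++ b) ≤ runsCount a + runsCount b
  | [], b => by simp [runsCount]
  | [x], [] => by simp [runsCount]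
  | [x], y :: l => by
      simp only [List.cons_append, List.nil_append, runsCount]
      split <;> omega
  | x :: y :: l, b => by
      have ih := runsCount_append_le (y :: l) b
      simp only [List.cons_append, List.append_eq, runsCount] at *
      split <;> omega

theorem runsCount_add_le {β : Type*} [DecidableEq β] :
    ∀ (a b : List β), runsCount a + runsCount b ≤ runsCount (a ++ b) + 1
  | [], b => by simp [runsCount]
  | [x], [] => by simp [runsCount]
  | [x], y :: l => by
      simp only [List.cons_append, List.nil_append, runsCount]
      split <;> omega
  | x :: y :: l, b => by
      have ih := runsCount_add_le (y :: l) b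
      simp only [List.cons_append, List.append_eq, runsCount] at *
      split <;> omega

theorem runsCount_flatten_le {β : Type*} [DecidableEq β] :
    ∀ (l : List (List β)), runsCount l.flatten ≤ (l.map runsCount).sum
  | [] => by simp [runsCount]
  | a :: l => by
      have ih := runsCount_flatten_le l
      have h := runsCount_append_le a l.flatten
      simp only [List.flatten_cons, List.map_cons, List.sum_cons]
      omega

theorem sum_le_runsCount_flatten {β : Type*} [DecidableEq β] :
    ∀ (l : List (List β)), (l.map runsCount).sum ≤ runsCount l.flatten + l.length
  | [] => by simp
  | a :: l => by
      have ih := sum_le_runsCount_flatten l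
      have h := runsCount_add_le a l.flatten
      simp only [List.flatten_cons, List.map_cons, List.sum_cons, List.length_cons]
      omega

theorem runs_of_interleaving_le {β : Type*} [DecidableEq β]
    (SS : List (List β)) (segs : List (List β))
    (hpart : ∃ pieces : List (List (List β)),
      List.Forall₂ (fun p s => p.flatten = s) pieces SS ∧ segs.Perm pieces.flatten) :
    runsCount segs.flatten ≤ (SS.map runsCount).sum + segs.length := by
  obtain ⟨pieces, hforall, hperm⟩ := hpart
  have hlen : segs.length = pieces.flatten.length := hperm.length_eq
  have hsum : (segs.map runsCount).sum = (pieces.flatten.map runsCount).sum :=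
    (hperm.map runsCount).sum_eq
  have h1 : runsCount segs.flatten ≤ (segs.map runsCount).sum :=
    runsCount_flatten_le segs
  have h2 : (pieces.flatten.map runsCount).sum ≤
      (SS.map runsCount).sum + pieces.flatten.length := by
    clear h1 hsum hlen hperm
    induction hforall with
    | nil => simp
    | @cons p s ps ss hps _ ih =>
      have hb := sum_le_runsCount_flatten p
      rw [hps] at hb
      simp only [List.flatten_cons, List.map_cons, List.sum_cons, List.map_append,
        List.sum_append, List.length_append]
      omega
  omega
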